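/- arXiv:2101.11144 — 4 statements merged into one kernel-verified Lean document; each statement's English description precedes it below -/
import Mathlib

section
/- Let r, m, m̃, c be positive integers and let A ∈ ℝ^{r×m}. For each i ∈ {1,…,c} let F_i ∈ ℝ^{m×m̃} be a matrix of rank m̃, suppose all the F_i have the same column space, and suppose rank(A·F_i) = m̃ for every i. Let Z ∈ ℝ^{r×m̃} be a matrix whose column space is contained in the column space of A·F_1. If for each i the matrix G_i ∈ ℝ^{m̃×m̃} minimizes the function G ↦ ‖Z − A·F_i·G‖_F over all G ∈ ℝ^{m̃×m̃}, then F_1·G_1 = F_2·G_2 = … = F_c·G_c. -/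
open Matrix


/-- Frobenius norm of a real matrix: the square root of the sum of the squares of its entries. -/
noncomputable def frob {r k : ℕ} (M : Matrix (Fin r) (Fin k) ℝ) : ℝ :=
  Real.sqrt (∑ i, ∑ j, (M i j) ^ 2)

lemma frob_eq_zero_iff {r k : ℕ} (M : Matrix (Fin r) (Fin k) ℝ) :
    frob M = 0 ↔ M = 0 := by
  unfold frob
  rw [Real.sqrt_eq_zero (by positivity)]
  constructor
  · intro h
    ext a b
    have h2 := (Finset.sum_eq_zero_iff_of_nonneg (fun a _ => by positivity)).mp h a
      (Finset.mem_univ a)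
    have h3 := (Finset.sum_eq_zero_iff_of_nonneg (fun j _ => by positivity)).mp h2 b
      (Finset.mem_univ b)
    simpa using h3
  · intro h; subst h; simp

lemma inj_of_rank {r k : ℕ} (M : Matrix (Fin r) (Fin k) ℝ) (h : M.rank = k) :
    Function.Injective M.mulVecLin := by
  rw [← LinearMap.ker_eq_bot]
  have h1 := LinearMap.finrank_range_add_finrank_ker M.mulVecLin
  rw [Matrix.rank] at h
  rw [h] at h1
  simp only [Module.finrank_pi, Fintype.card_fin] at h1
  have : Module.finrank ℝ (LinearMap.ker M.mulVecLin) = 0 := by omega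
  exact Submodule.finrank_eq_zero.mp this

theorem collaborative_maps_equal
    (r m mt c : ℕ) (hr : 0 < r) (hm : 0 < m) (hmt : 0 < mt) (hc : 0 < c)
    (A : Matrix (Fin r) (Fin m) ℝ)
    (F : Fin c → Matrix (Fin m) (Fin mt) ℝ)
    (G : Fin c → Matrix (Fin mt) (Fin mt) ℝ)
    (Z : Matrix (Fin r) (Fin mt) ℝ)
    (hrankF : ∀ i, (F i).rank = mt)
    (hrange : ∀ i j, LinearMap.range (F i).mulVecLin = LinearMap.range (F j).mulVecLin)
    (hrankAF : ∀ i, (A * F i).rank = mt)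
    (hZ : LinearMap.range Z.mulVecLin ≤ LinearMap.range (A * F ⟨0, hc⟩).mulVecLin)
    (hmin : ∀ i, ∀ G' : Matrix (Fin mt) (Fin mt) ℝ,
      frob (Z - A * F i * G i) ≤ frob (Z - A * F i * G')) :
    ∀ i j, F i * G i = F j * G j := by
  -- ranges of A * F i are all equal
  have hrangeAF : ∀ i j : Fin c,
      LinearMap.range (A * F i).mulVecLin = LinearMap.range (A * F j).mulVecLin := by
    intro i j
    rw [Matrix.mulVecLin_mul, Matrix.mulVecLin_mul, LinearMap.range_comp,
      LinearMap.range_comp, hrange i j]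
  -- Z = A * F i * G i for all i
  have hZeq : ∀ i, Z = A * F i * G i := by
    intro i
    -- each column of Z is in range of (A * F i).mulVecLin
    have hcol : ∀ b : Fin mt, ∃ g : Fin mt → ℝ, (A * F i) *ᵥ g = (fun a => Z a b) := by
      intro b
      have hmem : (fun a => Z a b) ∈ LinearMap.range Z.mulVecLin := by
        refine ⟨Pi.single b 1, ?_⟩
        ext a
        simp [Matrix.mulVecLin, Matrix.mulVec_single]
      have := hZ hmem
      rw [hrangeAF ⟨0, hc⟩ i] at this
      exact this
    choose g hg using hcol
    set G' : Matrix (Fin mt) (Fin mt) ℝ := Matrix.of (fun a b => g b a) with hG'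
    have hZG' : Z = A * F i * G' := by
      ext a b
      have := congrFun (hg b) a
      simp only [Matrix.mulVec, dotProduct] at this
      simp [Matrix.mul_apply, hG', ← this]
    have h0 : frob (Z - A * F i * G') = 0 := by
      rw [← hZG', sub_self]
      simp [frob]
    have hle := hmin i G'
    rw [h0] at hle
    have hnn : 0 ≤ frob (Z - A * F i * G i) := Real.sqrt_nonneg _
    have : frob (Z - A * F i * G i) = 0 := le_antisymm hle hnn
    have := (frob_eq_zero_iff _).mp this
    have := sub_eq_zero.mp this
    exact this.symm ▸ rfl
  intro i j
  -- injectivity of (A * F i).mulVecLin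
  have hinj := inj_of_rank (A * F i) (hrankAF i)
  -- A * (F i * G i) = A * (F j * G j)
  have hA : A * (F i * G i) = A * (F j * G j) := by
    rw [← Matrix.mul_assoc, ← Matrix.mul_assoc, ← hZeq i, ← hZeq j]
  ext a b
  -- compare columns
  set u : Fin m → ℝ := (F i * G i) *ᵥ Pi.single b 1 with hu
  set v : Fin m → ℝ := (F j * G j) *ᵥ Pi.single b 1 with hv
  have huv : u = v := by
    -- v is in range of (F i).mulVecLin
    have hvmem : v ∈ LinearMap.range (F i).mulVecLin := by
      rw [hrange i j]
      refine ⟨G j *ᵥ Pi.single b 1, ?_⟩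
      rw [Matrix.mulVecLin_apply, Matrix.mulVec_mulVec]
    obtain ⟨y, hy⟩ := hvmem
    have hAu : A *ᵥ u = A *ᵥ v := by
      rw [hu, hv, Matrix.mulVec_mulVec, Matrix.mulVec_mulVec, hA]
    have hy2 : F i *ᵥ y = v := hy
    have hui : F i *ᵥ (G i *ᵥ Pi.single b 1) = u := by
      rw [hu, Matrix.mulVec_mulVec]
    have hkey : (A * F i) *ᵥ (G i *ᵥ Pi.single b 1) = (A * F i) *ᵥ y := by
      rw [← Matrix.mulVec_mulVec, ← Matrix.mulVec_mulVec, hui, hy2]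
      exact hAu
    have heq := hinj hkey
    calc u = F i *ᵥ (G i *ᵥ Pi.single b 1) := hui.symm
      _ = F i *ᵥ y := by rw [heq]
      _ = v := hy2
  have hcu : u a = (F i * G i) a b := by
    simp [hu, Matrix.mulVec_single]
  have hcv : v a = (F j * G j) a b := by
    simp [hv, Matrix.mulVec_single]
  rw [← hcu, ← hcv, huv]
end

section
/- Let A ∈ ℝ^{r×m}, F ∈ ℝ^{m×k}, and let t be a natural number. Then Σ_{j>t} σ_j(A·F)² ≤ ‖A‖_F² · Σ_{j>t} σ_j(F)², i.e., the sum of the squares of the singular values of A·F after the t largest is at most ‖A‖_F² times the sum of the squares of the singular values of F after the t largest. -/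
/-- The squared singular values of a real matrix `M`, in decreasing order:
`svSq M j` is the `j`-th largest (0-indexed) eigenvalue of `MᵀM`,
i.e. the square of the `j`-th largest singular value of `M`. -/
noncomputable def svSq {r k : ℕ} (M : Matrix (Fin r) (Fin k) ℝ) : Fin k → ℝ :=
  fun j =>
    ((show (Matrix.transpose M * M).IsHermitian by simpa using Matrix.isHermitian_conjTranspose_mul_self M).eigenvalues ∘
      Tuple.sort (show (Matrix.transpose M * M).IsHermitian by simpa using Matrix.isHermitian_conjTranspose_mul_self M).eigenvalues) j.rev

/-- `Σ_{j>t} σ_j(M)²`: the sum of the squares of all singular values of `M`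
after the `t` largest. -/
noncomputable def svTailSq {r k : ℕ} (M : Matrix (Fin r) (Fin k) ℝ) (t : ℕ) : ℝ :=
  ∑ j ∈ Finset.univ.filter (fun j : Fin k => t ≤ (j : ℕ)), svSq M j

/-!
Let `U` be an orthogonal matrix diagonalising `FᵀF` and `S` the set of columns of `U` belonging to
its `k - t` smallest eigenvalues. By Ky Fan's minimum principle the sum of the `k - t` smallest
eigenvalues of `(AF)ᵀ(AF)` is at most `∑_{j ∈ S} ‖AF u_j‖²`, and by Cauchy–Schwarz
`‖AF u_j‖² ≤ ‖A‖_F² ‖F u_j‖² = ‖A‖_F² λ_j(FᵀF)`.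

Ky Fan's principle: in an eigenbasis of `H`, the sum `∑_{j ∈ S} u_jᵀ H u_j` is `∑ᵢ λᵢ cᵢ` with
weights `cᵢ ∈ [0, 1]` of total `|S|`, and such a weighted sum is smallest when weight `1` sits on
the `|S|` smallest eigenvalues.
-/

open Finset Matrix

theorem Monotone.sum_le_sum_mul_of_isLowerSet {ι : Type*} [Fintype ι] [LinearOrder ι]
    {f c : ι → ℝ} (hf : Monotone f) {T : Finset ι} (hT : IsLowerSet (T : Set ι))
    (hc₀ : ∀ i, 0 ≤ c i) (hc₁ : ∀ i, c i ≤ 1) (hc : ∑ i, c i = #T) :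
    ∑ i ∈ T, f i ≤ ∑ i, f i * c i := by
  rcases T.eq_empty_or_nonempty with rfl | hne
  · have hc0 : ∀ i ∈ univ, c i = 0 :=
      (sum_eq_zero_iff_of_nonneg fun i _ => hc₀ i).1 (by simpa using hc)
    have : ∑ i, f i * c i = 0 := sum_eq_zero fun i hi => by rw [hc0 i hi, mul_zero]
    simp [this]
  -- `τ` separates the values of `f` on `T` from those off `T`.
  set τ := f (T.max' hne)
  have key : ∀ i, (if i ∈ T then f i else 0) + τ * (c i - if i ∈ T then 1 else 0) ≤ f i * c i := by
    intro i
    by_cases hi : i ∈ T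
    · have : f i ≤ τ := hf (T.le_max' i hi)
      simp only [hi, if_true]
      nlinarith [hc₁ i]
    · have : τ ≤ f i := hf (le_of_lt (not_le.1 fun h => hi (hT h (T.max'_mem hne))))
      simp only [hi, if_false]
      nlinarith [hc₀ i]
  have hsum := sum_le_sum fun i (_ : i ∈ univ) => key i
  simpa [sum_add_distrib, ← mul_sum, sum_sub_distrib, sum_ite_mem, hc] using hsum

namespace Matrix

theorem transpose_mul_self_apply_self {m n R : Type*} [Fintype m] [CommSemiring R]
    (M : Matrix m n R) (j : n) : (Mᵀ * M) j j = ∑ i, M i j ^ 2 := by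
  simp [mul_apply, sq]

theorem sum_sq_col_eq_one_of_mem_unitaryGroup {n : Type*} [Fintype n] [DecidableEq n]
    {U : Matrix n n ℝ} (hU : U ∈ unitaryGroup n ℝ) (j : n) : ∑ i, U i j ^ 2 = 1 := by
  rw [← transpose_mul_self_apply_self]
  exact (congrFun (congrFun (mem_unitaryGroup_iff'.1 hU) j) j).trans (one_apply_eq j)

theorem sum_sq_row_eq_one_of_mem_unitaryGroup {n : Type*} [Fintype n] [DecidableEq n]
    {U : Matrix n n ℝ} (hU : U ∈ unitaryGroup n ℝ) (i : n) : ∑ j, U i j ^ 2 = 1 :=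
  sum_sq_col_eq_one_of_mem_unitaryGroup (transpose_mem_unitaryGroup_iff.2 hU) i

theorem transpose_mul_diagonal_mul_apply_self {n : Type*} [Fintype n] [DecidableEq n]
    (W : Matrix n n ℝ) (d : n → ℝ) (j : n) :
    (Wᵀ * diagonal d * W) j j = ∑ i, d i * W i j ^ 2 := by
  rw [mul_apply]
  simp only [mul_diagonal, transpose_apply, sq]
  exact sum_congr rfl fun i _ => by ring

theorem isHermitian_transpose_mul_self {m n : Type*} [Fintype m] (M : Matrix m n ℝ) :
    (Mᵀ * M).IsHermitian := by
  simpa using isHermitian_conjTranspose_mul_self M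

namespace IsHermitian

variable {k : ℕ} {H : Matrix (Fin k) (Fin k) ℝ} (hH : H.IsHermitian)

noncomputable def sortedEigenvalues : Fin k → ℝ :=
  hH.eigenvalues ∘ Tuple.sort hH.eigenvalues

theorem monotone_sortedEigenvalues : Monotone hH.sortedEigenvalues :=
  Tuple.monotone_sort _

theorem eigenvectorUnitary_transpose_mul_mul :
    (hH.eigenvectorUnitary : Matrix (Fin k) (Fin k) ℝ)ᵀ * H * hH.eigenvectorUnitary
      = diagonal hH.eigenvalues := by
  have h := hH.conjStarAlgAut_star_eigenvectorUnitary
  rw [Unitary.conjStarAlgAut_star_apply, RCLike.ofReal_real_eq_id, Function.id_comp] at h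
  exact h

theorem sum_sortedEigenvalues_le_sum_diag {U : Matrix (Fin k) (Fin k) ℝ}
    (hU : U ∈ unitaryGroup (Fin k) ℝ) {S T : Finset (Fin k)} (hT : IsLowerSet (T : Set (Fin k)))
    (hST : #S = #T) :
    ∑ p ∈ T, hH.sortedEigenvalues p ≤ ∑ j ∈ S, (Uᵀ * H * U) j j := by
  set V : Matrix (Fin k) (Fin k) ℝ := (hH.eigenvectorUnitary : Matrix (Fin k) (Fin k) ℝ)
  set W := Vᵀ * U
  have hW : W ∈ unitaryGroup (Fin k) ℝ := mul_mem (Unitary.star_mem hH.eigenvectorUnitary.2) hU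
  have hUHU : Uᵀ * H * U = Wᵀ * diagonal hH.eigenvalues * W := by
    have hV : V * Vᵀ = 1 := mem_unitaryGroup_iff.1 hH.eigenvectorUnitary.2
    rw [← hH.eigenvectorUnitary_transpose_mul_mul]
    simp only [W, transpose_mul, transpose_transpose, Matrix.mul_assoc]
    rw [← Matrix.mul_assoc V, hV, Matrix.one_mul, ← Matrix.mul_assoc V, hV, Matrix.one_mul]
  set c : Fin k → ℝ := fun i => ∑ j ∈ S, W i j ^ 2
  set ρ := Tuple.sort hH.eigenvalues
  have hdiag : ∑ j ∈ S, (Uᵀ * H * U) j j = ∑ p, hH.sortedEigenvalues p * c (ρ p) := by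
    simp only [hUHU, transpose_mul_diagonal_mul_apply_self]
    rw [sum_comm, ← Equiv.sum_comp ρ]
    simp only [c, sortedEigenvalues, Function.comp_apply, mul_sum, ρ]
  rw [hdiag]
  refine hH.monotone_sortedEigenvalues.sum_le_sum_mul_of_isLowerSet hT
    (fun p => sum_nonneg fun j _ => sq_nonneg _) (fun p => ?_) ?_
  · calc c (ρ p) ≤ ∑ j, W (ρ p) j ^ 2 :=
          sum_le_sum_of_subset_of_nonneg (subset_univ S) fun j _ _ => sq_nonneg _
      _ = 1 := sum_sq_row_eq_one_of_mem_unitaryGroup hW _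
  · rw [Equiv.sum_comp ρ c, sum_comm]
    simp [sum_sq_col_eq_one_of_mem_unitaryGroup hW, hST]

end IsHermitian
end Matrix

theorem frob_sq {r k : ℕ} (M : Matrix (Fin r) (Fin k) ℝ) : frob M ^ 2 = ∑ i, ∑ j, M i j ^ 2 :=
  Real.sq_sqrt (sum_nonneg fun _ _ => sum_nonneg fun _ _ => sq_nonneg _)

theorem transpose_mul_self_apply_self_mul_le_frob_sq {r m k : ℕ} (A : Matrix (Fin r) (Fin m) ℝ)
    (B : Matrix (Fin m) (Fin k) ℝ) (j : Fin k) :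
    ((A * B)ᵀ * (A * B)) j j ≤ frob A ^ 2 * (Bᵀ * B) j j := by
  rw [transpose_mul_self_apply_self, transpose_mul_self_apply_self, frob_sq, sum_mul]
  exact sum_le_sum fun i _ => by
    simpa only [mul_apply] using sum_mul_sq_le_sq_mul_sq univ (A i) (fun l => B l j)

theorem svTailSq_eq_sum_sortedEigenvalues {r k : ℕ} (M : Matrix (Fin r) (Fin k) ℝ) (t : ℕ) :
    svTailSq M t = ∑ p ∈ univ.filter (fun p : Fin k => (p : ℕ) + t < k),
      (isHermitian_transpose_mul_self M).sortedEigenvalues p := by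
  refine sum_equiv Fin.revPerm (fun j => ?_) fun j _ => by
    simp [svSq, IsHermitian.sortedEigenvalues]
  simp only [mem_filter, mem_univ, true_and, Fin.revPerm_apply, Fin.val_rev]
  omega

theorem singular_tail_of_product
    (r m k : ℕ) (A : Matrix (Fin r) (Fin m) ℝ) (F : Matrix (Fin m) (Fin k) ℝ) (t : ℕ) :
    svTailSq (A * F) t ≤ frob A ^ 2 * svTailSq F t := by
  have hF := isHermitian_transpose_mul_self F
  set U : Matrix (Fin k) (Fin k) ℝ := (hF.eigenvectorUnitary : Matrix (Fin k) (Fin k) ℝ)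
  set T := univ.filter (fun p : Fin k => (p : ℕ) + t < k)
  have hT : IsLowerSet (T : Set (Fin k)) := fun a b hba ha => by
    simp only [T, coe_filter, mem_univ, true_and, Set.mem_ofPred_eq] at ha ⊢
    exact lt_of_le_of_lt (by simpa using hba) ha
  have hdiag : (F * U)ᵀ * (F * U) = diagonal hF.eigenvalues := by
    rw [transpose_mul, Matrix.mul_assoc, ← Matrix.mul_assoc Fᵀ, ← Matrix.mul_assoc]
    exact hF.eigenvectorUnitary_transpose_mul_mul
  -- `S` indexes the eigenvectors of `FᵀF` for its `k - t` smallest eigenvalues.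
  set S := T.map (Tuple.sort hF.eigenvalues).toEmbedding
  calc svTailSq (A * F) t
      ≤ ∑ j ∈ S, (Uᵀ * ((A * F)ᵀ * (A * F)) * U) j j := by
        rw [svTailSq_eq_sum_sortedEigenvalues]
        exact IsHermitian.sum_sortedEigenvalues_le_sum_diag _ hF.eigenvectorUnitary.2 hT
          (card_map _)
    _ = ∑ j ∈ S, ((A * (F * U))ᵀ * (A * (F * U))) j j := by
        simp only [transpose_mul, Matrix.mul_assoc]
    _ ≤ ∑ j ∈ S, frob A ^ 2 * ((F * U)ᵀ * (F * U)) j j :=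
        sum_le_sum fun j _ => transpose_mul_self_apply_self_mul_le_frob_sq A (F * U) j
    _ = frob A ^ 2 * ∑ j ∈ S, hF.eigenvalues j := by
        simp only [hdiag, diagonal_apply_eq, mul_sum]
    _ = frob A ^ 2 * svTailSq F t := by
        rw [svTailSq_eq_sum_sortedEigenvalues, sum_map]
        rfl
end

section
/- Let m, m̃ be positive integers with m̃ < m, let f : ℝ^m → ℝ^m̃ be a linear map, and let g : ℝ^m̃ → ℝ^m be a Borel measurable function. Then the set {x ∈ ℝ^m : g(f(x)) = x} has Lebesgue measure zero in ℝ^m. -/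
open MeasureTheory Set

theorem reconstructible_set_null
    (m mt : ℕ) (hmt : 0 < mt) (hlt : mt < m)
    (f : (Fin m → ℝ) →ₗ[ℝ] (Fin mt → ℝ))
    (g : (Fin mt → ℝ) → (Fin m → ℝ)) (hg : Measurable g) :
    volume {x : Fin m → ℝ | g (f x) = x} = 0 := by
  -- find a nonzero kernel vector
  obtain ⟨v, hv, hv0⟩ : ∃ v, f v = 0 ∧ v ≠ 0 := by
    by_contra h
    push_neg at h
    have hinj : Function.Injective f := by
      rw [← LinearMap.ker_eq_bot, Submodule.eq_bot_iff]
      intro x hx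
      by_contra hx0
      exact hx0 (h x (by simpa using hx))
    have := LinearMap.finrank_le_finrank_of_injective hinj
    simp [Module.finrank_fintype_fun_eq_card] at this
    omega
  set S : Set (Fin m → ℝ) := {x : Fin m → ℝ | g (f x) = x} with hS
  have hfc : Continuous f := f.continuous_of_finiteDimensional
  have hmeas : MeasurableSet S :=
    measurableSet_eq_fun (hg.comp hfc.measurable) measurable_id
  have hc : (0:ℝ) < 1/2 := by norm_num
  have hc1 : (1:ℝ)/2 < 1 := by norm_num
  refine Measure.addHaar_eq_zero_of_disjoint_translates volume
    (fun n : ℕ => ((1/2:ℝ) ^ n) • v) ?_ ?_ hmeas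
  · exact Metric.isBounded_range_of_tendsto _
      ((tendsto_pow_atTop_nhds_zero_of_lt_one hc.le hc1).smul_const v)
  · intro a b hab
    simp only [Function.onFun, image_add_left, singleton_add, disjoint_left]
    intro y hya hyb
    simp only [mem_preimage] at hya hyb
    have ha : g (f (-(((1/2:ℝ)^a) • v) + y)) = -(((1/2:ℝ)^a) • v) + y := hya
    have hb : g (f (-(((1/2:ℝ)^b) • v) + y)) = -(((1/2:ℝ)^b) • v) + y := hyb
    have hfv : ∀ t : ℝ, f (-(t • v) + y) = f y := by
      intro t
      rw [map_add, map_neg, LinearMap.map_smul, hv]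
      simp
    rw [hfv] at ha hb
    have heq : -(((1/2:ℝ)^a) • v) + y = -(((1/2:ℝ)^b) • v) + y := ha.symm.trans hb
    have hpow : ((1/2:ℝ)^a) • v = ((1/2:ℝ)^b) • v := by
      have := add_right_cancel heq
      simpa using this
    have hab' : ((1/2:ℝ)^a) = ((1/2:ℝ)^b) := by
      by_contra hne
      apply hv0
      have : (((1/2:ℝ)^a) - ((1/2:ℝ)^b)) • v = 0 := by
        rw [sub_smul, hpow, sub_self]
      exact (smul_eq_zero.1 this).resolve_left (sub_ne_zero.2 hne)
    exact hab ((pow_right_strictAnti₀ hc hc1).injective hab')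
end

section
/- Let m, m̃ be positive integers with m̃ < m, let f : ℝ^m → ℝ^m̃ be a linear map, let g : ℝ^m̃ → ℝ^m be a Borel measurable function, and let X be an ℝ^m-valued random vector whose law is absolutely continuous with respect to Lebesgue measure. Then E[‖X − g(f(X))‖₂] > 0; that is, the expected reconstruction distance ε₁ in the ε-DR privacy definition E[dist(x, x′)] ≥ ε₁ (with x′ = f†(f(x)) and dist the Euclidean distance) is strictly positive whenever m > m̃. -/
open MeasureTheory

theorem expected_reconstruction_distance_pos
    (m mt : ℕ) (hmt : 0 < mt) (hlt : mt < m)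
    (f : EuclideanSpace ℝ (Fin m) →ₗ[ℝ] EuclideanSpace ℝ (Fin mt))
    (g : EuclideanSpace ℝ (Fin mt) → EuclideanSpace ℝ (Fin m))
    (hg : Measurable g)
    {Ω : Type*} [MeasureSpace Ω] [IsProbabilityMeasure (volume : Measure Ω)]
    (X : Ω → EuclideanSpace ℝ (Fin m)) (hX : Measurable X)
    (habs : (volume : Measure Ω).map X ≪ (volume : Measure (EuclideanSpace ℝ (Fin m)))) :
    0 < ∫⁻ ω, (‖X ω - g (f (X ω))‖₊ : ENNReal) ∂(volume : Measure Ω) := by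
  classical
  -- f has nontrivial kernel
  have hnotinj : ¬ Function.Injective f := by
    intro hinj
    have := LinearMap.finrank_le_finrank_of_injective hinj
    rw [finrank_euclideanSpace_fin, finrank_euclideanSpace_fin] at this
    omega
  rw [Function.not_injective_iff] at hnotinj
  obtain ⟨a, b, hab, hne⟩ := hnotinj
  set v : EuclideanSpace ℝ (Fin m) := a - b with hv
  have hv0 : v ≠ 0 := sub_ne_zero.mpr hne
  have hfv : f v = 0 := by simp [hv, map_sub, hab]
  have hfc : Continuous f := f.continuous_of_finiteDimensional
  -- the fixed point set
  set S : Set (EuclideanSpace ℝ (Fin m)) := {x | g (f x) = x} with hSdef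
  have hS : MeasurableSet S := measurableSet_eq_fun (by fun_prop) measurable_id
  -- each line x + t•v meets S in at most one point
  have hsub : ∀ x : EuclideanSpace ℝ (Fin m), ({t : ℝ | x + t • v ∈ S}).Subsingleton := by
    intro x t₁ h1 t₂ h2
    have e1 : g (f (x + t₁ • v)) = x + t₁ • v := h1
    have e2 : g (f (x + t₂ • v)) = x + t₂ • v := h2
    have hf12 : f (x + t₁ • v) = f (x + t₂ • v) := by
      simp [map_add, _root_.map_smul, hfv]
    have heq : x + t₁ • v = x + t₂ • v := by rw [← e1, hf12, e2]
    have htv : (t₁ - t₂) • v = 0 := by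
      rw [sub_smul, add_left_cancel heq, sub_self]
    rcases smul_eq_zero.mp htv with h | h
    · exact sub_eq_zero.mp h
    · exact absurd h hv0
  -- Fubini: volume S = 0
  have hS0 : volume S = 0 := by
    have hmeas : Measurable fun p : ℝ × EuclideanSpace ℝ (Fin m) =>
        S.indicator (fun _ => (1 : ENNReal)) (p.2 + p.1 • v) := by
      apply Measurable.indicator measurable_const
      exact (measurable_snd.add (measurable_fst.smul_const v)) hS
    have hswap :
        ∫⁻ t : ℝ, ∫⁻ x : EuclideanSpace ℝ (Fin m),
            S.indicator (fun _ => (1 : ENNReal)) (x + t • v) ∂volume ∂volume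
          = ∫⁻ x : EuclideanSpace ℝ (Fin m), ∫⁻ t : ℝ,
            S.indicator (fun _ => (1 : ENNReal)) (x + t • v) ∂volume ∂volume :=
      lintegral_lintegral_swap hmeas.aemeasurable
    have hinner : ∀ t : ℝ,
        ∫⁻ x : EuclideanSpace ℝ (Fin m),
          S.indicator (fun _ => (1 : ENNReal)) (x + t • v) ∂volume = volume S := by
      intro t
      rw [lintegral_add_right_eq_self (fun y => S.indicator (fun _ => (1 : ENNReal)) y) (t • v)]
      exact lintegral_indicator_one hS
    have hinner2 : ∀ x : EuclideanSpace ℝ (Fin m),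
        ∫⁻ t : ℝ, S.indicator (fun _ => (1 : ENNReal)) (x + t • v) ∂volume = 0 := by
      intro x
      have heq : (fun t : ℝ => S.indicator (fun _ => (1 : ENNReal)) (x + t • v))
          = ({t : ℝ | x + t • v ∈ S}).indicator (fun _ => (1 : ENNReal)) := by
        funext t
        by_cases h : x + t • v ∈ S <;> simp [Set.indicator, h]
      rw [heq]
      have hTm : MeasurableSet {t : ℝ | x + t • v ∈ S} :=
        ((measurable_id.smul_const v).const_add x) hS
      exact (lintegral_indicator_one hTm).trans ((hsub x).measure_zero volume)
    have h1 : ∫⁻ _ : ℝ, volume S ∂volume = 0 := by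
      calc ∫⁻ _ : ℝ, volume S ∂volume
          = ∫⁻ t : ℝ, ∫⁻ x : EuclideanSpace ℝ (Fin m),
              S.indicator (fun _ => (1 : ENNReal)) (x + t • v) ∂volume ∂volume := by
            simp_rw [hinner]
        _ = ∫⁻ x : EuclideanSpace ℝ (Fin m), ∫⁻ t : ℝ,
              S.indicator (fun _ => (1 : ENNReal)) (x + t • v) ∂volume ∂volume := hswap
        _ = 0 := by simp_rw [hinner2]; simp
    rw [lintegral_const] at h1
    by_contra hne0
    rw [Real.volume_univ, ENNReal.mul_top hne0] at h1
    exact ENNReal.top_ne_zero h1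
  -- hence a.e. ω, X ω ∉ S
  have hpre : volume (X ⁻¹' S) = 0 := by
    have := habs hS0
    rwa [Measure.map_apply hX hS] at this
  -- conclude positivity
  set h : Ω → ENNReal := fun ω => (‖X ω - g (f (X ω))‖₊ : ENNReal) with hh
  have hhm : Measurable h := by
    apply Measurable.coe_nnreal_ennreal
    fun_prop
  rw [lintegral_pos_iff_support hhm]
  have hcompl : (Function.support h)ᶜ ⊆ X ⁻¹' S := by
    intro ω hω
    simp only [Function.mem_support, not_not, Set.mem_compl_iff] at hω
    have h0 : ‖X ω - g (f (X ω))‖₊ = 0 := by have := hω; rw [hh] at this; simp only [] at this; exact_mod_cast (show ((‖X ω - g (f (X ω))‖₊ : ENNReal)) = 0 from this)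
    have h0' : X ω - g (f (X ω)) = 0 := by simpa using h0
    exact (sub_eq_zero.mp h0').symm
  have hcompl0 : volume ((Function.support h)ᶜ) = 0 :=
    measure_mono_null hcompl hpre
  by_contra hpos
  push_neg at hpos
  have hs0 : volume (Function.support h) = 0 := le_antisymm hpos zero_le
  have huniv : (volume : Measure Ω) Set.univ = 0 := by
    have hle := measure_union_le (μ := (volume : Measure Ω))
      (Function.support h) ((Function.support h)ᶜ)
    rw [Set.union_compl_self, hs0, hcompl0] at hle
    exact le_antisymm (by simpa using hle) zero_le
  simp [measure_univ] at huniv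
end
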